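/- arXiv:1604.08325 — 3 statements merged into one kernel-verified Lean document; each statement's English description precedes it below -/
import Mathlib

section
/- Let δ = μ − Σλᵢ ∈ ℕ. Any 1-cocycle Ω(X_h,F) = Σ_α B_α h' F^{(α)} with constant coefficients is cohomologous to Σ_{|α|=δ} B_α h' F^{(α)}: the difference Ω − ∂b with b(F) = Σ_{|α|≠δ} (B_α/(δ−|α|)) F^{(α)} satisfies (Ω−∂b)(X_h,F) = Σ_{|α|=δ} B_α h' F^{(α)}. -/
/-- `L^ν_h(f) = h f' + ν h' f`. -/
noncomputable def lieDer (ν : ℝ) (h f : ℝ → ℝ) : ℝ → ℝ :=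
  fun x => h x * deriv f x + ν * deriv h x * f x

/-- `F^{(α)} = f₁^{(α₁)} ⋯ fₙ^{(αₙ)}`. -/
noncomputable def Fder {n : ℕ} (α : Fin n → ℕ) (F : Fin n → ℝ → ℝ) : ℝ → ℝ :=
  fun x => ∏ i, iteratedDeriv (α i) (F i) x

/-- The action `X_h · A = L^μ_h ∘ A - A ∘ L^λ_h`; `∂b(X_h) = X_h · b`. -/
noncomputable def opAct {n : ℕ} (μ : ℝ) (lam : Fin n → ℝ) (h : ℝ → ℝ)
    (A : (Fin n → ℝ → ℝ) → ℝ → ℝ) (F : Fin n → ℝ → ℝ) : ℝ → ℝ :=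
  fun x => lieDer μ h (A F) x - ∑ i, A (Function.update F i (lieDer (lam i) h (F i))) x

private lemma lieDer_apply (ν : ℝ) (h f : ℝ → ℝ) (x : ℝ) :
    lieDer ν h f x = h x * deriv f x + ν * deriv h x * f x := rfl

private lemma affine_hasDerivAt (a c x : ℝ) : HasDerivAt (fun t => a + c * t) c x := by
  simpa using ((hasDerivAt_id x).const_mul c).const_add a

private lemma affine_deriv (a c : ℝ) : deriv (fun t => a + c * t) = fun _ => c := by
  funext x; exact (affine_hasDerivAt a c x).deriv

private lemma itder_hasDerivAt (f : ℝ → ℝ) (hf : ContDiff ℝ (⊤ : ℕ∞) f) (m : ℕ) (x : ℝ) :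
    HasDerivAt (iteratedDeriv m f) (iteratedDeriv (m + 1) f x) x := by
  have := ((hf.differentiable_iteratedDeriv m (by exact_mod_cast ENat.coe_lt_top m)) x).hasDerivAt
  rwa [← iteratedDeriv_succ] at this

private lemma itder_lie (ν a c : ℝ) (f : ℝ → ℝ) (hf : ContDiff ℝ (⊤ : ℕ∞) f) (m : ℕ) :
    iteratedDeriv m (lieDer ν (fun t => a + c * t) f)
      = fun x => (a + c * x) * iteratedDeriv (m + 1) f x
          + (ν + m) * c * iteratedDeriv m f x := by
  induction m with
  | zero =>
    funext x
    simp only [lieDer, affine_deriv, iteratedDeriv_zero, iteratedDeriv_one, Nat.cast_zero,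
      add_zero, zero_add]
  | succ m ih =>
    rw [iteratedDeriv_succ, ih]
    funext x
    have H := ((affine_hasDerivAt a c x).fun_mul (itder_hasDerivAt f hf (m + 1) x)).fun_add
      ((itder_hasDerivAt f hf m x).const_mul ((ν + m) * c))
    rw [H.deriv]
    push_cast
    ring

private lemma fder_hasDerivAt {n : ℕ} (α : Fin n → ℕ) (F : Fin n → ℝ → ℝ)
    (hF : ∀ i, ContDiff ℝ (⊤ : ℕ∞) (F i)) (x : ℝ) :
    HasDerivAt (Fder α F)
      (∑ i, (∏ j ∈ Finset.univ.erase i, iteratedDeriv (α j) (F j) x)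
          * iteratedDeriv (α i + 1) (F i) x) x := by
  have H := HasDerivAt.fun_finsetProd (u := (Finset.univ : Finset (Fin n)))
    (f := fun i => iteratedDeriv (α i) (F i))
    (f' := fun i => iteratedDeriv (α i + 1) (F i) x) (x := x)
    (fun i _ => itder_hasDerivAt (F i) (hF i) (α i) x)
  simp only [smul_eq_mul] at H
  exact H

private lemma key {n : ℕ} (lam : Fin n → ℝ) (μ a c : ℝ) (α : Fin n → ℕ)
    (F : Fin n → ℝ → ℝ) (hF : ∀ i, ContDiff ℝ (⊤ : ℕ∞) (F i)) (x : ℝ) :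
    lieDer μ (fun t => a + c * t) (Fder α F) x
      - ∑ i, Fder α (Function.update F i (lieDer (lam i) (fun t => a + c * t) (F i))) x
    = (μ - ∑ i, lam i - ∑ i, (α i : ℝ)) * c * Fder α F x := by
  set P : Fin n → ℝ := fun j => iteratedDeriv (α j) (F j) x with hP
  have hup : ∀ i, Fder α (Function.update F i (lieDer (lam i) (fun t => a + c * t) (F i))) x
      = (a + c * x) * ((∏ j ∈ Finset.univ.erase i, P j) * iteratedDeriv (α i + 1) (F i) x)
        + (lam i + α i) * c * Fder α F x := by
    intro i
    have h1 : ∀ j, iteratedDeriv (α j)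
        (Function.update F i (lieDer (lam i) (fun t => a + c * t) (F i)) j) x
        = Function.update P i
            (iteratedDeriv (α i) (lieDer (lam i) (fun t => a + c * t) (F i)) x) j := by
      intro j
      rcases eq_or_ne j i with rfl | hji
      · simp
      · simp [Function.update_of_ne hji, hP]
    unfold Fder
    rw [Finset.prod_congr rfl (fun j _ => h1 j),
      Finset.prod_update_of_mem (Finset.mem_univ i), itder_lie _ _ _ _ (hF i),
      Finset.sdiff_singleton_eq_erase]
    have h2 : P i * ∏ j ∈ Finset.univ.erase i, P j = Fder α F x := by
      rw [Finset.mul_prod_erase _ _ (Finset.mem_univ i)]; rfl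
    rw [add_mul]
    rw [show (lam i + ↑(α i)) * c * iteratedDeriv (α i) (F i) x
        * ∏ j ∈ Finset.univ.erase i, P j
      = (lam i + ↑(α i)) * c * (P i * ∏ j ∈ Finset.univ.erase i, P j) by rw [hP]; ring, h2]
    rw [show (∏ i, iteratedDeriv (α i) (F i) x) = Fder α F x from rfl]
    ring
  rw [Finset.sum_congr rfl (fun i _ => hup i), Finset.sum_add_distrib, ← Finset.mul_sum,
    lieDer, affine_deriv, (fder_hasDerivAt α F hF x).deriv]
  rw [show ∑ i, (lam i + (α i : ℝ)) * c * Fder α F x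
    = ((∑ i, lam i) + ∑ i, (α i : ℝ)) * c * Fder α F x by
      rw [← Finset.sum_add_distrib]; rw [← Finset.sum_mul, ← Finset.sum_mul]]
  ring

private theorem aux {n : ℕ} (lam : Fin n → ℝ) (μ : ℝ) (S : Finset (Fin n → ℕ))
    (B : (Fin n → ℕ) → ℝ) (a c : ℝ) (F : Fin n → ℝ → ℝ)
    (hF : ∀ i, ContDiff ℝ (⊤ : ℕ∞) (F i)) (x : ℝ) :
    (∑ α ∈ S, B α * deriv (fun t => a + c * t) x * Fder α F x)
        - opAct μ lam (fun t => a + c * t)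
            (fun G x => ∑ α ∈ S.filter
                (fun α => ((∑ i, α i : ℕ) : ℝ) ≠ (μ - ∑ i, lam i)),
              B α / ((μ - ∑ i, lam i) - ((∑ i, α i : ℕ) : ℝ)) * Fder α G x) F x
      = ∑ α ∈ S.filter (fun α => ((∑ i, α i : ℕ) : ℝ) = (μ - ∑ i, lam i)),
          B α * deriv (fun t => a + c * t) x * Fder α F x := by
  set δ : ℝ := μ - ∑ i, lam i with hδ
  set S' := S.filter (fun α => ((∑ i, α i : ℕ) : ℝ) ≠ δ) with hS'
  have hop : opAct μ lam (fun t => a + c * t)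
      (fun G x => ∑ α ∈ S', B α / (δ - ((∑ i, α i : ℕ) : ℝ)) * Fder α G x) F x
      = ∑ α ∈ S', B α * c * Fder α F x := by
    have hbF : HasDerivAt
        (fun y => ∑ α ∈ S', B α / (δ - ((∑ i, α i : ℕ) : ℝ)) * Fder α F y)
        (∑ α ∈ S', B α / (δ - ((∑ i, α i : ℕ) : ℝ)) *
          (∑ i, (∏ j ∈ Finset.univ.erase i, iteratedDeriv (α j) (F j) x)
            * iteratedDeriv (α i + 1) (F i) x)) x :=
      HasDerivAt.fun_sum (fun α _ => (fder_hasDerivAt α F hF x).const_mul _)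
    show lieDer μ (fun t => a + c * t)
        (fun y => ∑ α ∈ S', B α / (δ - ((∑ i, α i : ℕ) : ℝ)) * Fder α F y) x
      - ∑ i, ∑ α ∈ S', B α / (δ - ((∑ i, α i : ℕ) : ℝ))
          * Fder α (Function.update F i (lieDer (lam i) (fun t => a + c * t) (F i))) x
      = ∑ α ∈ S', B α * c * Fder α F x
    rw [lieDer_apply, hbF.deriv, affine_deriv]
    rw [Finset.sum_comm]
    rw [Finset.mul_sum, Finset.mul_sum, ← Finset.sum_add_distrib, ← Finset.sum_sub_distrib]
    refine Finset.sum_congr rfl (fun α hα => ?_)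
    have hne : ((∑ i, α i : ℕ) : ℝ) ≠ δ := (Finset.mem_filter.1 hα).2
    have hsub : δ - ((∑ i, α i : ℕ) : ℝ) ≠ 0 := sub_ne_zero_of_ne (Ne.symm hne)
    have hC : B α / (δ - ((∑ i, α i : ℕ) : ℝ)) * (δ - ((∑ i, α i : ℕ) : ℝ)) = B α :=
      div_mul_cancel₀ _ hsub
    have hk := key lam μ a c α F hF x
    rw [lieDer_apply, affine_deriv, (fder_hasDerivAt α F hF x).deriv] at hk
    rw [show (∑ i, ((α i : ℕ) : ℝ)) = ((∑ i, α i : ℕ) : ℝ) by push_cast; ring] at hk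
    rw [← Finset.mul_sum]
    rw [show μ - (∑ i, lam i) - ((∑ i, α i : ℕ) : ℝ) = δ - ((∑ i, α i : ℕ) : ℝ) from rfl] at hk
    linear_combination (B α / (δ - ((∑ i, α i : ℕ) : ℝ))) * hk + c * Fder α F x * hC
  rw [hop, affine_deriv]
  have hsplit := Finset.sum_filter_add_sum_filter_not S
    (fun α => ((∑ i, α i : ℕ) : ℝ) = δ) (fun α => B α * c * Fder α F x)
  have hS'' : S' = S.filter (fun α => ¬ ((∑ i, α i : ℕ) : ℝ) = δ) := rfl
  rw [hS''] at *
  simp only []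
  linarith [hsplit]

/-- For `δ = μ - Σλᵢ = k ∈ ℕ`, the cocycle `Ω(X_h,F) = Σ_α B_α h' F^{(α)}` is cohomologous to
`Σ_{|α|=δ} B_α h' F^{(α)}`, via `b(F) = Σ_{|α|≠δ} (B_α/(δ-|α|)) F^{(α)}`. -/
theorem cocycle_normal_form (n : ℕ) (lam : Fin n → ℝ) (μ : ℝ) (k : ℕ)
    (hδ : μ - ∑ i, lam i = (k : ℝ))
    (S : Finset (Fin n → ℕ)) (B : (Fin n → ℕ) → ℝ) :
    let δ : ℝ := μ - ∑ i, lam i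
    let b : (Fin n → ℝ → ℝ) → ℝ → ℝ :=
      fun G x => ∑ α ∈ S.filter (fun α => ((∑ i, α i : ℕ) : ℝ) ≠ δ),
        B α / (δ - ((∑ i, α i : ℕ) : ℝ)) * Fder α G x
    ∀ a c : ℝ, ∀ (F : Fin n → ℝ → ℝ), (∀ i, ContDiff ℝ (⊤ : ℕ∞) (F i)) → ∀ x,
      (∑ α ∈ S, B α * deriv (fun t => a + c * t) x * Fder α F x)
          - opAct μ lam (fun t => a + c * t) b F x
        = ∑ α ∈ S.filter (fun α => ((∑ i, α i : ℕ) : ℝ) = δ),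
            B α * deriv (fun t => a + c * t) x * Fder α F x := by
  intro δ b a c F hF x
  exact aux lam μ S B a c F hF x
end

section
/- Let λ ∈ ℝⁿ, μ ∈ ℝ, δ = μ − Σλᵢ. If A : ℝ·dx^{−1/2} ⊗ F_{λ₁} ⊗ ⋯ ⊗ F_{λₙ} → F_μ is a nonzero aff(1)-invariant (n+1)-ary differential operator, then δ + 1/2 ∈ ℕ, and A has the form A(a, f₁,…,fₙ) = a·Σ_{|α| = δ+1/2} c_α F^{(α)} with constants c_α. -/
lemma hasDerivAt_exp_mul (b x : ℝ) :
    HasDerivAt (fun t => Real.exp (b * t)) (b * Real.exp (b * x)) x := by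
  simpa [mul_comm, Function.comp_def] using (Real.hasDerivAt_exp (b * x)).comp x ((hasDerivAt_id x).const_mul b)

lemma iter_exp_mul (d b : ℝ) (k : ℕ) :
    iteratedDeriv k (fun t => d * Real.exp (b * t)) = fun x => d * b ^ k * Real.exp (b * x) := by
  induction k with
  | zero => simp [iteratedDeriv_zero]
  | succ k ih =>
    rw [iteratedDeriv_succ, ih]
    funext x
    have : HasDerivAt (fun x => d * b ^ k * Real.exp (b * x))
        (d * b ^ k * (b * Real.exp (b * x))) x := (hasDerivAt_exp_mul b x).const_mul _
    rw [this.deriv]; ring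

lemma iter_exp (b : ℝ) (k : ℕ) :
    iteratedDeriv k (fun t => Real.exp (b * t)) = fun x => b ^ k * Real.exp (b * x) := by
  have := iter_exp_mul 1 b k
  simpa using this

lemma iter_affexp (b l : ℝ) (k : ℕ) :
    iteratedDeriv k (fun t => (t * b + l) * Real.exp (b * t))
      = fun x => b ^ k * ((x * b + l + k) * Real.exp (b * x)) := by
  induction k with
  | zero => simp [iteratedDeriv_zero]
  | succ k ih =>
    rw [iteratedDeriv_succ, ih]
    funext x
    have h1 : HasDerivAt (fun x : ℝ => x * b + l + k) b x := by
      simpa [add_assoc] using ((hasDerivAt_id x).mul_const b).add_const (l + (k:ℝ))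
    have h2 : HasDerivAt (fun x => b ^ k * ((x * b + l + k) * Real.exp (b * x)))
        (b ^ k * (b * Real.exp (b * x) + (x * b + l + k) * (b * Real.exp (b * x)))) x :=
      (h1.mul (hasDerivAt_exp_mul b x)).const_mul _
    rw [h2.deriv]; push_cast; ring

lemma monomial_indep {n : ℕ} (S : Finset (Fin n → ℕ)) (d : (Fin n → ℕ) → ℝ)
    (h : ∀ b : Fin n → ℝ, ∑ α ∈ S, d α * ∏ i, b i ^ α i = 0) :
    ∀ α ∈ S, d α = 0 := by
  classical
  set P : MvPolynomial (Fin n) ℝ :=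
    ∑ α ∈ S, MvPolynomial.monomial (Finsupp.equivFunOnFinite.symm α) (d α) with hPdef
  have hP : P = 0 := by
    apply MvPolynomial.funext
    intro b
    have heval : ∀ α : Fin n → ℕ,
        MvPolynomial.eval b (MvPolynomial.monomial (Finsupp.equivFunOnFinite.symm α) (d α))
          = d α * ∏ i, b i ^ α i := by
      intro α
      rw [MvPolynomial.eval_monomial]
      congr 1
      rw [Finsupp.prod_fintype]
      · rfl
      · intro i; simp
    simp only [hPdef, map_sum, heval, map_zero]
    exact h b
  intro α hα
  have := congrArg (MvPolynomial.coeff (Finsupp.equivFunOnFinite.symm α)) hP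
  rw [hPdef, MvPolynomial.coeff_zero, MvPolynomial.coeff_sum] at this
  simp only [MvPolynomial.coeff_monomial, EmbeddingLike.apply_eq_iff_eq] at this
  rwa [Finset.sum_ite_eq' S α (fun β => d β), if_pos hα] at this

lemma Fder_exp {n : ℕ} (b : Fin n → ℝ) (α : Fin n → ℕ) (x : ℝ) :
    Fder α (fun i t => Real.exp (b i * t)) x
      = (∏ i, b i ^ α i) * Real.exp ((∑ i, b i) * x) := by
  unfold Fder
  have : ∀ i : Fin n, iteratedDeriv (α i) (fun t => Real.exp (b i * t)) x
      = b i ^ α i * Real.exp (b i * x) := fun i => by rw [iter_exp]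
  rw [Finset.prod_congr rfl (fun i _ => this i), Finset.prod_mul_distrib, ← Real.exp_sum,
    ← Finset.sum_mul]

lemma Fder_update {n : ℕ} (α : Fin n → ℕ) (F : Fin n → ℝ → ℝ) (i : Fin n) (g : ℝ → ℝ)
    (x r : ℝ) (hg : iteratedDeriv (α i) g x = r * iteratedDeriv (α i) (F i) x) :
    Fder α (Function.update F i g) x = r * Fder α F x := by
  classical
  unfold Fder
  have h1 : ∀ j, iteratedDeriv (α j) (Function.update F i g j) x
      = Function.update (fun j => iteratedDeriv (α j) (F j) x) i
          (r * iteratedDeriv (α i) (F i) x) j := by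
    intro j
    rcases eq_or_ne j i with rfl | hne
    · simp [hg]
    · simp [Function.update_of_ne hne]
  rw [Finset.prod_congr rfl (fun j _ => h1 j),
    Finset.prod_update_of_mem (Finset.mem_univ i),
    ← Finset.mul_prod_erase Finset.univ _ (Finset.mem_univ i), mul_assoc, Finset.erase_eq]

lemma deriv_sumexp {γ : Type*} (S : Finset γ) (c : γ → ℝ → ℝ) (hc : ∀ α, ContDiff ℝ (⊤ : ℕ∞) (c α))
    (K : γ → ℝ) (B a x : ℝ) :
    deriv (fun y => a * ∑ α ∈ S, c α y * (K α * Real.exp (B * y))) x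
      = a * ∑ α ∈ S, (deriv (c α) x * (K α * Real.exp (B * x))
          + c α x * (K α * (B * Real.exp (B * x)))) := by
  have hterm : ∀ α ∈ S, HasDerivAt (fun y => c α y * (K α * Real.exp (B * y)))
      (deriv (c α) x * (K α * Real.exp (B * x))
        + c α x * (K α * (B * Real.exp (B * x)))) x := by
    intro α _
    exact (((hc α).differentiable (by simp) x).hasDerivAt).mul
      ((hasDerivAt_exp_mul B x).const_mul (K α))
  exact ((HasDerivAt.fun_sum hterm).const_mul a).deriv

/-- If the `(n+1)`-ary differential operator
`A : ℝ·dx^{-1/2} ⊗ F_{λ₁} ⊗ ⋯ ⊗ F_{λₙ} → F_μ`, `A(a,f₁,…,fₙ) = a Σ_α c_α(x) F^{(α)}`,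
is nonzero and `aff(1)`-invariant (invariant under `X_1` and `X_x`), then
`δ + 1/2 ∈ ℕ` where `δ = μ - Σλᵢ`, and `A(a,f₁,…,fₙ) = a Σ_{|α|=δ+1/2} c_α F^{(α)}`
with constant coefficients. -/
theorem aff1_invariant_operator (n : ℕ) (lam : Fin n → ℝ) (μ : ℝ)
    (S : Finset (Fin n → ℕ)) (c : (Fin n → ℕ) → ℝ → ℝ) (hc : ∀ α, ContDiff ℝ (⊤ : ℕ∞) (c α))
    (A : ℝ → (Fin n → ℝ → ℝ) → ℝ → ℝ)
    (hA : ∀ a F x, A a F x = a * ∑ α ∈ S, c α x * Fder α F x)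
    (hX1 : ∀ (a : ℝ) (F : Fin n → ℝ → ℝ), (∀ i, ContDiff ℝ (⊤ : ℕ∞) (F i)) → ∀ x,
      deriv (A a F) x = ∑ i, A a (Function.update F i (deriv (F i))) x)
    (hXx : ∀ (a : ℝ) (F : Fin n → ℝ → ℝ), (∀ i, ContDiff ℝ (⊤ : ℕ∞) (F i)) → ∀ x,
      x * deriv (A a F) x + (μ + 1/2) * A a F x
        = ∑ i, A a (Function.update F i (fun t => t * deriv (F i) t + lam i * F i t)) x)
    (hne : ∃ (a : ℝ) (F : Fin n → ℝ → ℝ) (x : ℝ),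
      (∀ i, ContDiff ℝ (⊤ : ℕ∞) (F i)) ∧ A a F x ≠ 0) :
    let δ : ℝ := μ - ∑ i, lam i
    (∃ m : ℕ, δ + 1/2 = (m : ℝ)) ∧
    ∃ c' : (Fin n → ℕ) → ℝ, ∀ (a : ℝ) (F : Fin n → ℝ → ℝ) (x : ℝ),
      A a F x = a * ∑ α ∈ S.filter (fun α => ((∑ i, α i : ℕ) : ℝ) = δ + 1/2),
        c' α * Fder α F x := by
  classical
  intro δ
  set L : ℝ := ∑ i, lam i with hLdef
  have hFbsmooth : ∀ (b : Fin n → ℝ) (i : Fin n),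
      ContDiff ℝ (⊤ : ℕ∞) (fun t => Real.exp (b i * t)) :=
    fun b i => Real.contDiff_exp.comp (contDiff_const.mul contDiff_id)
  have hderivFb : ∀ (b : Fin n → ℝ) (i : Fin n),
      deriv (fun t => Real.exp (b i * t)) = fun t => b i * Real.exp (b i * t) :=
    fun b i => funext fun t => (hasDerivAt_exp_mul (b i) t).deriv
  have hAfun : ∀ (b : Fin n → ℝ),
      A 1 (fun i t => Real.exp (b i * t))
        = fun y => 1 * ∑ α ∈ S, c α y * ((∏ i, b i ^ α i) * Real.exp ((∑ i, b i) * y)) := by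
    intro b
    funext y
    rw [hA]
    congr 1
    exact Finset.sum_congr rfl fun α _ => by rw [Fder_exp]
  -- Step 1: coefficients are constant
  have hderc : ∀ x, ∀ α ∈ S, deriv (c α) x = 0 := by
    intro x
    apply monomial_indep S (fun α => deriv (c α) x)
    intro b
    have h1 := hX1 1 (fun i t => Real.exp (b i * t)) (fun i => hFbsmooth b i) x
    rw [hAfun b, deriv_sumexp S c hc _ _ 1 x] at h1
    have hRHS : ∀ i : Fin n,
        A 1 (Function.update (fun i t => Real.exp (b i * t)) i
            (deriv ((fun i t => Real.exp (b i * t)) i))) x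
          = ∑ α ∈ S, c α x * (b i * ((∏ j, b j ^ α j) * Real.exp ((∑ j, b j) * x))) := by
      intro i
      rw [hA, one_mul]
      refine Finset.sum_congr rfl fun α _ => ?_
      congr 1
      rw [Fder_update α _ i _ x (b i), Fder_exp]
      simp only [hderivFb b]
      rw [iter_exp_mul (b i) (b i) (α i), iter_exp (b i) (α i)]
      ring
    simp only [hRHS] at h1
    have hswap : ∑ i : Fin n, ∑ α ∈ S,
        c α x * (b i * ((∏ j, b j ^ α j) * Real.exp ((∑ j, b j) * x)))
          = ∑ α ∈ S, c α x * ((∏ j, b j ^ α j) * ((∑ j, b j) * Real.exp ((∑ j, b j) * x))) := by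
      rw [Finset.sum_comm]
      refine Finset.sum_congr rfl fun α _ => ?_
      rw [← Finset.mul_sum, ← Finset.sum_mul]
      ring
    rw [hswap, one_mul, Finset.sum_add_distrib] at h1
    have h2 : ∑ α ∈ S,
        deriv (c α) x * ((∏ j, b j ^ α j) * Real.exp ((∑ j, b j) * x)) = 0 := by
      linarith [h1]
    have h3 : (∑ α ∈ S, deriv (c α) x * ∏ j, b j ^ α j)
        * Real.exp ((∑ j, b j) * x) = 0 := by
      rw [Finset.sum_mul]
      rw [← h2]
      exact Finset.sum_congr rfl fun α _ => by ring
    rcases mul_eq_zero.mp h3 with h | h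
    · exact h
    · exact absurd h (Real.exp_ne_zero _)
  have hconst : ∀ α ∈ S, ∀ x, c α x = c α 0 := fun α hα x =>
    is_const_of_deriv_eq_zero ((hc α).differentiable (by simp)) (fun y => hderc y α hα) x 0
  -- Step 2: weight condition
  have hzero : ∀ α ∈ S, c α 0 * (μ + 1/2 - L - ((∑ i, α i : ℕ) : ℝ)) = 0 := by
    apply monomial_indep S (fun α => c α 0 * (μ + 1/2 - L - ((∑ i, α i : ℕ) : ℝ)))
    intro b
    have h1 := hXx 1 (fun i t => Real.exp (b i * t)) (fun i => hFbsmooth b i) 0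
    have hRHS : ∀ i : Fin n,
        A 1 (Function.update (fun i t => Real.exp (b i * t)) i
            (fun t => t * deriv ((fun i t => Real.exp (b i * t)) i) t
              + lam i * (fun i t => Real.exp (b i * t)) i t)) 0
          = ∑ α ∈ S, c α 0 * ((lam i + (α i : ℝ))
              * ((∏ j, b j ^ α j) * Real.exp ((∑ j, b j) * 0))) := by
      intro i
      rw [hA, one_mul]
      refine Finset.sum_congr rfl fun α _ => ?_
      congr 1
      rw [Fder_update α _ i _ 0 (lam i + (α i : ℝ)), Fder_exp]
      have hgfun : (fun t => t * deriv ((fun i t => Real.exp (b i * t)) i) t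
          + lam i * (fun i t => Real.exp (b i * t)) i t)
            = fun t => (t * b i + lam i) * Real.exp (b i * t) := by
        simp only [hderivFb b]
        funext t; ring
      rw [hgfun, iter_affexp (b i) (lam i) (α i), iter_exp (b i) (α i)]
      ring
    simp only [hRHS] at h1
    rw [zero_mul, zero_add, hA 1 _ 0, one_mul] at h1
    have hFd : ∀ α ∈ S, c α 0 * Fder α (fun i t => Real.exp (b i * t)) 0
        = c α 0 * ((∏ j, b j ^ α j) * Real.exp ((∑ j, b j) * 0)) :=
      fun α _ => by rw [Fder_exp]
    rw [Finset.sum_congr rfl hFd] at h1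
    have hswap : ∑ i : Fin n, ∑ α ∈ S, c α 0 * ((lam i + (α i : ℝ))
        * ((∏ j, b j ^ α j) * Real.exp ((∑ j, b j) * 0)))
          = ∑ α ∈ S, c α 0 * ((L + ((∑ i, α i : ℕ) : ℝ))
              * ((∏ j, b j ^ α j) * Real.exp ((∑ j, b j) * 0))) := by
      rw [Finset.sum_comm]
      refine Finset.sum_congr rfl fun α _ => ?_
      rw [← Finset.mul_sum, ← Finset.sum_mul, Finset.sum_add_distrib, ← hLdef]
      push_cast
      ring
    rw [hswap] at h1
    simp only [mul_zero, Real.exp_zero, zero_mul, zero_add, one_mul, mul_one] at h1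
    have key : ∑ α ∈ S, c α 0 * (μ + 1/2 - L - ((∑ i, α i : ℕ) : ℝ)) * ∏ i, b i ^ α i
        = (μ + 1/2) * ∑ α ∈ S, c α 0 * ∏ j, b j ^ α j
          - ∑ α ∈ S, c α 0 * ((L + ((∑ i, α i : ℕ) : ℝ)) * ∏ j, b j ^ α j) := by
      rw [Finset.mul_sum, ← Finset.sum_sub_distrib]
      exact Finset.sum_congr rfl fun α _ => by ring
    rw [key, h1, sub_self]
  -- Step 3: extract nonzero coefficient
  obtain ⟨a, F, x₀, hF, hAx⟩ := hne
  rw [hA] at hAx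
  obtain ⟨-, hs⟩ := mul_ne_zero_iff.mp hAx
  obtain ⟨α₀, hα₀S, hterm⟩ := Finset.exists_ne_zero_of_sum_ne_zero hs
  have hc0 : c α₀ 0 ≠ 0 := by
    have := left_ne_zero_of_mul hterm
    rwa [hconst α₀ hα₀S x₀] at this
  have hδ : δ + 1/2 = ((∑ i, α₀ i : ℕ) : ℝ) := by
    have := hzero α₀ hα₀S
    rcases mul_eq_zero.mp this with h | h
    · exact absurd h hc0
    · have : μ + 1/2 - L - ((∑ i, α₀ i : ℕ) : ℝ) = 0 := h
      simp only [δ]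
      linarith
  refine ⟨⟨∑ i, α₀ i, hδ⟩, fun α => c α 0, ?_⟩
  intro a F x
  rw [hA]
  congr 1
  rw [Finset.sum_filter_of_ne]
  · exact Finset.sum_congr rfl fun α hα => by rw [hconst α hα x]
  · intro α hα hne'
    have hcα : c α 0 ≠ 0 := left_ne_zero_of_mul hne'
    have := hzero α hα
    rcases mul_eq_zero.mp this with h | h
    · exact absurd h hcα
    · simp only [δ]
      linarith [h]
end

section
/- An (n+1)-ary differential operator A(a,f₁,…,fₙ) = a·Σ_α c_α F^{(α)} with constant coefficients c_α, viewed as a map ℝ·dx^{−1/2}⊗F_{λ₁}⊗⋯⊗F_{λₙ} → F_μ, is invariant under X_x = x·d/dx if and only if c_α = 0 for all α with |α| ≠ δ + 1/2, where δ = μ − Σλᵢ. -/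
open Function Finset

lemma smooth_iterDeriv {f : ℝ → ℝ} (hf : ContDiff ℝ (⊤ : ℕ∞) f) (k : ℕ) :
    ContDiff ℝ (⊤ : ℕ∞) (iteratedDeriv k f) := by
  rw [iteratedDeriv_eq_iterate]; exact ContDiff.iterate_deriv k hf

lemma hasDerivAt_iterDeriv {f : ℝ → ℝ} (hf : ContDiff ℝ (⊤ : ℕ∞) f) (k : ℕ) (x : ℝ) :
    HasDerivAt (iteratedDeriv k f) (iteratedDeriv (k + 1) f x) x := by
  have h : Differentiable ℝ (iteratedDeriv k f) :=
    (smooth_iterDeriv hf k).differentiable (by simp)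
  rw [iteratedDeriv_succ]; exact (h x).hasDerivAt

lemma iterDeriv_cmul {f : ℝ → ℝ} (hf : ContDiff ℝ (⊤ : ℕ∞) f) (cst : ℝ) (k : ℕ) :
    ∀ x, iteratedDeriv k (fun t => cst * f t) x = cst * iteratedDeriv k f x := by
  induction k with
  | zero => intro x; simp
  | succ k ih =>
    intro x
    rw [iteratedDeriv_succ, funext ih, iteratedDeriv_succ]
    have hd : Differentiable ℝ (iteratedDeriv k f) :=
      (smooth_iterDeriv hf k).differentiable (by simp)
    rw [deriv_const_mul _ (hd x)]

lemma iterDeriv_pow_zero : ∀ (k m : ℕ),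
    iteratedDeriv k (fun t : ℝ => t ^ m) 0 = if k = m then (m.factorial : ℝ) else 0 := by
  intro k
  induction k with
  | zero =>
    intro m
    cases m with
    | zero => simp
    | succ m => simp
  | succ k ih =>
    intro m
    cases m with
    | zero =>
      rw [iteratedDeriv_succ']
      have h0 : deriv (fun t : ℝ => t ^ 0) = fun _ : ℝ => (0 : ℝ) := by
        funext t; simp
      rw [h0]
      have hz : ∀ j, iteratedDeriv j (fun _ : ℝ => (0 : ℝ)) = fun _ => (0 : ℝ) := by
        intro j
        induction j with
        | zero => simp
        | succ j ihj => rw [iteratedDeriv_succ', deriv_const']; exact ihj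
      simp [hz k]
    | succ m =>
      rw [iteratedDeriv_succ']
      have hD : deriv (fun t : ℝ => t ^ (m + 1)) = fun t : ℝ => ((m : ℝ) + 1) * t ^ m := by
        funext t
        rw [deriv_pow_field]
        push_cast; ring
      have hsm : ContDiff ℝ (⊤ : ℕ∞) (fun t : ℝ => t ^ m) := by
        exact contDiff_id.pow m
      rw [hD, iterDeriv_cmul hsm ((m : ℝ) + 1) k 0, ih m]
      rcases eq_or_ne k m with h | h
      · subst h
        simp only [if_pos rfl, Nat.factorial_succ]
        push_cast
        ring
      · simp [h, fun hc => h (Nat.succ_injective hc)]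

lemma iterDeriv_euler {f : ℝ → ℝ} (hf : ContDiff ℝ (⊤ : ℕ∞) f) (cst : ℝ) (k : ℕ) :
    ∀ x, iteratedDeriv k (fun t => t * deriv f t + cst * f t) x
      = x * iteratedDeriv (k + 1) f x + (cst + k) * iteratedDeriv k f x := by
  induction k with
  | zero => intro x; simp [iteratedDeriv_one]
  | succ k ih =>
    intro x
    rw [iteratedDeriv_succ, funext ih]
    have h1 : HasDerivAt (fun y => y * iteratedDeriv (k + 1) f y + (cst + k) * iteratedDeriv k f y)
        ((1 * iteratedDeriv (k + 1) f x + x * iteratedDeriv (k + 2) f x)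
          + (cst + k) * iteratedDeriv (k + 1) f x) x := by
      exact ((hasDerivAt_id x).mul (hasDerivAt_iterDeriv hf (k + 1) x)).add
        ((hasDerivAt_iterDeriv hf k x).const_mul (cst + k))
    rw [h1.deriv]
    push_cast
    ring

lemma Fder_eq_mul_erase {n : ℕ} (α : Fin n → ℕ) (F : Fin n → ℝ → ℝ) (i : Fin n) (x : ℝ) :
    Fder α F x = iteratedDeriv (α i) (F i) x * ∏ j ∈ univ.erase i, iteratedDeriv (α j) (F j) x :=
  (Finset.mul_prod_erase univ _ (mem_univ i)).symm

lemma Fder_update_exp {n : ℕ} (α : Fin n → ℕ) (F : Fin n → ℝ → ℝ) (i : Fin n) (x : ℝ) :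
    Fder (Function.update α i (α i + 1)) F x
      = iteratedDeriv (α i + 1) (F i) x * ∏ j ∈ univ.erase i, iteratedDeriv (α j) (F j) x := by
  rw [Fder_eq_mul_erase _ F i x, Function.update_self]
  congr 1
  exact Finset.prod_congr rfl fun j hj => by
    rw [Function.update_of_ne (Finset.mem_erase.1 hj).1]

lemma hasDerivAt_Fder {n : ℕ} (α : Fin n → ℕ) (F : Fin n → ℝ → ℝ)
    (hF : ∀ i, ContDiff ℝ (⊤ : ℕ∞) (F i)) (x : ℝ) :
    HasDerivAt (Fder α F) (∑ i, Fder (Function.update α i (α i + 1)) F x) x := by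
  have H := HasDerivAt.finset_prod (u := univ)
    (f := fun i : Fin n => fun y => iteratedDeriv (α i) (F i) y)
    (f' := fun i : Fin n => iteratedDeriv (α i + 1) (F i) x)
    (fun i _ => hasDerivAt_iterDeriv (hF i) (α i) x)
  have hsum : (∑ i, (∏ j ∈ univ.erase i, iteratedDeriv (α j) (F j) x)
        • iteratedDeriv (α i + 1) (F i) x)
      = ∑ i, Fder (Function.update α i (α i + 1)) F x := by
    refine Finset.sum_congr rfl fun i _ => ?_
    rw [Fder_update_exp, smul_eq_mul, mul_comm]
  rw [hsum] at H
  have hfe : Fder α F = ∏ i, fun y => iteratedDeriv (α i) (F i) y := by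
    funext y; simp only [Fder, Finset.prod_apply]
  rw [hfe]; exact H

lemma Fder_update_F {n : ℕ} (α : Fin n → ℕ) (F : Fin n → ℝ → ℝ)
    (hF : ∀ i, ContDiff ℝ (⊤ : ℕ∞) (F i)) (i : Fin n) (lami : ℝ) (x : ℝ) :
    Fder α (Function.update F i (fun t => t * deriv (F i) t + lami * F i t)) x
      = x * Fder (Function.update α i (α i + 1)) F x + (lami + α i) * Fder α F x := by
  rw [Fder_eq_mul_erase α _ i x, Function.update_self, Fder_update_exp, Fder_eq_mul_erase α F i x]
  have herase : (∏ j ∈ univ.erase i,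
        iteratedDeriv (α j) (Function.update F i (fun t => t * deriv (F i) t + lami * F i t) j) x)
      = ∏ j ∈ univ.erase i, iteratedDeriv (α j) (F j) x := by
    refine Finset.prod_congr rfl fun j hj => ?_
    rw [Function.update_of_ne (Finset.mem_erase.1 hj).1]
  rw [herase, iterDeriv_euler (hF i) lami (α i) x]
  ring

lemma key_alpha {n : ℕ} (lam : Fin n → ℝ) (μ : ℝ) (α : Fin n → ℕ) (F : Fin n → ℝ → ℝ)
    (hF : ∀ i, ContDiff ℝ (⊤ : ℕ∞) (F i)) (x : ℝ) :
    x * (∑ i, Fder (Function.update α i (α i + 1)) F x) + (μ + 1/2) * Fder α F x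
      - ∑ i, Fder α (Function.update F i (fun t => t * deriv (F i) t + lam i * F i t)) x
    = (μ + 1/2 - (∑ i, lam i) - ∑ i, (α i : ℝ)) * Fder α F x := by
  rw [Finset.sum_congr rfl (fun i _ => Fder_update_F α F hF i (lam i) x),
    Finset.sum_add_distrib, ← Finset.mul_sum, ← Finset.sum_mul, Finset.sum_add_distrib]
  ring

lemma reduce {n : ℕ} (lam : Fin n → ℝ) (μ : ℝ) (S : Finset (Fin n → ℕ))
    (c : (Fin n → ℕ) → ℝ) (a : ℝ) (F : Fin n → ℝ → ℝ)
    (hF : ∀ i, ContDiff ℝ (⊤ : ℕ∞) (F i)) (x : ℝ) :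
    (x * deriv (fun y => a * ∑ α ∈ S, c α * Fder α F y) x
      + (μ + 1/2) * (a * ∑ α ∈ S, c α * Fder α F x))
    - ∑ i, (a * ∑ α ∈ S, c α *
        Fder α (Function.update F i (fun t => t * deriv (F i) t + lam i * F i t)) x)
    = a * ∑ α ∈ S, c α * ((μ + 1/2 - (∑ i, lam i) - ∑ i, (α i : ℝ)) * Fder α F x) := by
  have hd : HasDerivAt (fun y => a * ∑ α ∈ S, c α * Fder α F y)
      (a * ∑ α ∈ S, c α * ∑ i, Fder (Function.update α i (α i + 1)) F x) x := by
    exact (HasDerivAt.fun_sum (fun α _ => (hasDerivAt_Fder α F hF x).const_mul (c α))).const_mul a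
  rw [hd.deriv]
  have hswap : (∑ i, (a * ∑ α ∈ S, c α *
        Fder α (Function.update F i (fun t => t * deriv (F i) t + lam i * F i t)) x))
      = a * ∑ α ∈ S, c α * ∑ i,
        Fder α (Function.update F i (fun t => t * deriv (F i) t + lam i * F i t)) x := by
    rw [← Finset.mul_sum, Finset.sum_comm]
    congr 1
    exact Finset.sum_congr rfl fun α _ => (Finset.mul_sum _ _ _).symm
  rw [hswap,
    show ∀ s1 s2 s3 s4 : ℝ, x * (a * s1) + (μ + 1/2) * (a * s2) - a * s3 = a * s4 ↔
      a * (x * s1 + (μ + 1/2) * s2 - s3) = a * s4 from fun _ _ _ _ => by constructor <;>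
        (intro h; linarith)]
  congr 1
  rw [Finset.mul_sum, Finset.mul_sum, ← Finset.sum_add_distrib, ← Finset.sum_sub_distrib]
  refine Finset.sum_congr rfl fun α _ => ?_
  have := key_alpha lam μ α F hF x
  linear_combination (c α) * this

/-- The constant-coefficient operator `A(a,f₁,…,fₙ) = a Σ_α c_α F^{(α)}` is invariant
under `X_x = x d/dx` if and only if `c_α = 0` for every `α` with `|α| ≠ δ + 1/2`,
where `δ = μ - Σλᵢ`. -/
theorem Xx_invariance_iff (n : ℕ) (lam : Fin n → ℝ) (μ : ℝ)
    (S : Finset (Fin n → ℕ)) (c : (Fin n → ℕ) → ℝ) :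
    let A : ℝ → (Fin n → ℝ → ℝ) → ℝ → ℝ :=
      fun a F x => a * ∑ α ∈ S, c α * Fder α F x
    ((∀ (a : ℝ) (F : Fin n → ℝ → ℝ), (∀ i, ContDiff ℝ (⊤ : ℕ∞) (F i)) → ∀ x,
        x * deriv (A a F) x + (μ + 1/2) * A a F x
          = ∑ i, A a (Function.update F i (fun t => t * deriv (F i) t + lam i * F i t)) x)
      ↔ ∀ α ∈ S, ((∑ i, α i : ℕ) : ℝ) ≠ (μ - ∑ i, lam i) + 1/2 → c α = 0) := by
  intro A
  constructor
  · intro hinv β hβ hne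
    set Fm : Fin n → ℝ → ℝ := fun i t => t ^ (β i) with hFm
    have hFsm : ∀ i, ContDiff ℝ (⊤ : ℕ∞) (Fm i) := fun i => contDiff_id.pow _
    have h' : (0 : ℝ) * deriv (fun y => 1 * ∑ α ∈ S, c α * Fder α Fm y) 0
        + (μ + 1/2) * (1 * ∑ α ∈ S, c α * Fder α Fm 0)
        = ∑ i, (1 * ∑ α ∈ S, c α *
            Fder α (Function.update Fm i (fun t => t * deriv (Fm i) t + lam i * Fm i t)) 0) :=
      hinv 1 Fm hFsm 0
    have h2 := reduce lam μ S c 1 Fm (fun i => (hFsm i).of_le (by simp)) 0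
    rw [h', sub_self] at h2
    have hsum : ∑ α ∈ S, c α * ((μ + 1/2 - (∑ i, lam i) - ∑ i, (α i : ℝ)) * Fder α Fm 0) = 0 := by
      have := h2.symm
      linarith
    have hFd : ∀ α : Fin n → ℕ,
        Fder α Fm 0 = ∏ i, (if α i = β i then ((β i).factorial : ℝ) else 0) := by
      intro α
      exact Finset.prod_congr rfl fun i _ => iterDeriv_pow_zero (α i) (β i)
    rw [Finset.sum_congr rfl (fun α _ => by rw [hFd α])] at hsum
    rw [Finset.sum_eq_single β
      (fun α _ hne' => by
        obtain ⟨i, hi⟩ := Function.ne_iff.1 hne'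
        have hp : (∏ i, if α i = β i then ((β i).factorial : ℝ) else 0) = 0 :=
          Finset.prod_eq_zero (mem_univ i) (if_neg hi)
        rw [hp]
        ring)
      (fun h => absurd hβ h)] at hsum
    simp only [if_pos rfl] at hsum
    have hK : μ + 1/2 - (∑ i, lam i) - ∑ i, ((β i : ℝ)) ≠ 0 := by
      intro h0
      apply hne
      push_cast
      linarith
    have hfac : (∏ i, ((β i).factorial : ℝ)) ≠ 0 := by
      rw [Finset.prod_ne_zero_iff]
      intro i _
      exact_mod_cast (β i).factorial_ne_zero
    rcases mul_eq_zero.1 hsum with h | h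
    · exact h
    · exact absurd (mul_eq_zero.1 h) (by rintro (h | h) <;> [exact hK h; exact hfac h])
  · intro hc a F hF x
    have h2 := reduce lam μ S c a F (fun i => (hF i).of_le (by simp)) x
    have hz : ∑ α ∈ S, c α * ((μ + 1/2 - (∑ i, lam i) - ∑ i, (α i : ℝ)) * Fder α F x) = 0 := by
      refine Finset.sum_eq_zero fun α hα => ?_
      rcases eq_or_ne (((∑ i, α i : ℕ)) : ℝ) ((μ - ∑ i, lam i) + 1/2) with h | h
      · have h3 : μ + 1/2 - (∑ i, lam i) - ∑ i, (α i : ℝ) = 0 := by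
          push_cast at h ⊢
          linarith
        rw [h3]
        ring
      · rw [hc α hα h]
        ring
    rw [hz, mul_zero] at h2
    exact sub_eq_zero.mp h2
end
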